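/- Let y be in the closure of the shift-orbit of Ψ_q(x) for some x ∈ {0,1}^ℕ (p ≥ 3, 1 ≤ q ≤ p−1). Then there exists k₀ ∈ {0,…,p−1} such that Ω_{k₀}(y) lies in the closure of the shift-orbit of Ψ_q(σ(x)), where (Ω_k(y))_j = y_{pj+k} and σ is the one-sided shift on {0,1}^ℕ. -/
import Mathlib



open Classical in
/-- `Ψ_q(x)_j = x_n` if `j ≡ q·pⁿ (mod pⁿ⁺¹)` for some (unique) `n`, and `$` (= `none`)
otherwise. -/
noncomputable def Psi (p q : ℕ) (x : ℕ → Bool) : ℤ → Option Bool :=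
  fun j =>
    if h : ∃ n : ℕ, j ≡ (q : ℤ) * (p : ℤ) ^ n [ZMOD (p : ℤ) ^ (n + 1)]
    then some (x h.choose) else none

/-- The three-symbol alphabet `{0,1,$}` carries the discrete topology. -/
instance : TopologicalSpace (Option Bool) := ⊥

instance : DiscreteTopology (Option Bool) := ⟨rfl⟩

lemma not_p_dvd_q {p q : ℕ} (hp : 3 ≤ p) (hq1 : 1 ≤ q) (hq2 : q ≤ p - 1) :
    ¬ ((p:ℤ) ∣ (q:ℤ)) := by
  intro h
  have hq : (q:ℤ) < (p:ℤ) := by exact_mod_cast (by omega : q < p)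
  have h1 : (0:ℤ) < (q:ℤ) := by exact_mod_cast hq1
  have := Int.le_of_dvd h1 h
  omega

lemma uniq_n {p q : ℕ} (hp : 3 ≤ p) (hq1 : 1 ≤ q) (hq2 : q ≤ p - 1) {t : ℤ} {n m : ℕ}
    (hn : t ≡ (q:ℤ) * (p:ℤ)^n [ZMOD (p:ℤ)^(n+1)])
    (hm : t ≡ (q:ℤ) * (p:ℤ)^m [ZMOD (p:ℤ)^(m+1)]) : n = m := by
  by_contra hne
  wlog h : n < m generalizing n m
  · exact this hm hn (Ne.symm hne) (by omega)
  obtain ⟨d, rfl⟩ : ∃ d, m = n + 1 + d := ⟨m - n - 1, by omega⟩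
  have h1 : (q:ℤ) * (p:ℤ)^n ≡ (q:ℤ)*(p:ℤ)^(n+1+d) [ZMOD (p:ℤ)^(n+1)] :=
    hn.symm.trans (hm.of_dvd (pow_dvd_pow _ (by omega)))
  have h2 : (p:ℤ)^(n+1) ∣ (q:ℤ)*(p:ℤ)^(n+1+d) - (q:ℤ)*(p:ℤ)^n := Int.ModEq.dvd h1
  have h3 : (p:ℤ)^n * (p:ℤ) ∣ (p:ℤ)^n * ((q:ℤ)*(p:ℤ)*(p:ℤ)^d - q) := by
    have e : (q:ℤ)*(p:ℤ)^(n+1+d) - (q:ℤ)*(p:ℤ)^n = (p:ℤ)^n * ((q:ℤ)*(p:ℤ)*(p:ℤ)^d - q) := by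
      ring
    have e2 : (p:ℤ)^(n+1) = (p:ℤ)^n * (p:ℤ) := by ring
    rw [e, e2] at h2; exact h2
  have hp0 : (p:ℤ)^n ≠ 0 := by positivity
  have h4 : (p:ℤ) ∣ (q:ℤ)*(p:ℤ)*(p:ℤ)^d - q := (mul_dvd_mul_iff_left hp0).mp h3
  have h5 : (p:ℤ) ∣ (q:ℤ) := by
    have hd : (p:ℤ) ∣ (q:ℤ)*(p:ℤ)*(p:ℤ)^d := ⟨(q:ℤ)*(p:ℤ)^d, by ring⟩
    simpa using dvd_sub hd h4
  exact not_p_dvd_q hp hq1 hq2 h5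

lemma cancel_p {p q : ℕ} (hp : 3 ≤ p) (s : ℤ) (n : ℕ) :
    ((p:ℤ)*s ≡ (q:ℤ)*(p:ℤ)^(n+1) [ZMOD (p:ℤ)^(n+1+1)]) ↔
      (s ≡ (q:ℤ)*(p:ℤ)^n [ZMOD (p:ℤ)^(n+1)]) := by
  have hp0 : (p:ℤ) ≠ 0 := by positivity
  rw [Int.modEq_iff_dvd, Int.modEq_iff_dvd,
    show (q:ℤ)*(p:ℤ)^(n+1) - (p:ℤ)*s = (p:ℤ)*((q:ℤ)*(p:ℤ)^n - s) by ring,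
    show ((p:ℤ)^(n+1+1)) = (p:ℤ)*(p:ℤ)^(n+1) by ring,
    mul_dvd_mul_iff_left hp0]

lemma psi_mul {p q : ℕ} (hp : 3 ≤ p) (hq1 : 1 ≤ q) (hq2 : q ≤ p - 1) (x : ℕ → Bool) (t : ℤ) :
    Psi p q x ((p:ℤ) * t) = Psi p q (fun n => x (n+1)) t := by
  have hpq := not_p_dvd_q hp hq1 hq2
  have hzero : ¬ ((p:ℤ)*t ≡ (q:ℤ)*(p:ℤ)^0 [ZMOD (p:ℤ)^(0+1)]) := by
    intro h
    rw [Int.modEq_iff_dvd] at h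
    simp only [pow_zero, zero_add, pow_one, mul_one] at h
    have : (p:ℤ) ∣ (q:ℤ) := by
      have hd : (p:ℤ) ∣ (p:ℤ)*t := Dvd.intro t rfl
      simpa using dvd_add h hd
    exact hpq this
  unfold Psi
  by_cases hR : ∃ n : ℕ, t ≡ (q:ℤ)*(p:ℤ)^n [ZMOD (p:ℤ)^(n+1)]
  · have hL : ∃ m : ℕ, (p:ℤ)*t ≡ (q:ℤ)*(p:ℤ)^m [ZMOD (p:ℤ)^(m+1)] := by
      obtain ⟨n, hn⟩ := hR
      exact ⟨n+1, (cancel_p hp t n).mpr hn⟩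
    rw [dif_pos hL, dif_pos hR]
    have h1 := hL.choose_spec
    have h2 := hR.choose_spec
    have hm0 : hL.choose ≠ 0 := fun h0 => hzero (h0 ▸ h1)
    obtain ⟨m', hm'⟩ := Nat.exists_eq_succ_of_ne_zero hm0
    rw [hm'] at h1
    have h3 : t ≡ (q:ℤ)*(p:ℤ)^m' [ZMOD (p:ℤ)^(m'+1)] := (cancel_p hp t m').mp h1
    have h4 : m' = hR.choose := uniq_n hp hq1 hq2 h3 h2
    rw [hm', h4]
  · have hL : ¬ ∃ m : ℕ, (p:ℤ)*t ≡ (q:ℤ)*(p:ℤ)^m [ZMOD (p:ℤ)^(m+1)] := by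
      rintro ⟨m, hm⟩
      rcases m with _ | m'
      · exact hzero hm
      · exact hR ⟨m', (cancel_p hp t m').mp hm⟩
    rw [dif_neg hL, dif_neg hR]


/-- If `y` lies in the closure of the shift-orbit of `Ψ_q(x)`, then
there is `k₀ ∈ {0,…,p−1}` with `Ω_{k₀}(y)` in the closure of the shift-orbit of
`Ψ_q(σ(x))`, where `(Ω_k y)_j = y_{pj+k}` and `σ(x)_n = x_{n+1}`. -/
theorem stmt_12 (p q : ℕ) (hp : 3 ≤ p) (hq1 : 1 ≤ q) (hq2 : q ≤ p - 1)
    (x : ℕ → Bool) (y : ℤ → Option Bool)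
    (hy : y ∈ closure {y : ℤ → Option Bool | ∃ m : ℤ, y = fun j => Psi p q x (j + m)}) :
    ∃ k₀ : ℕ, k₀ ≤ p - 1 ∧
      (fun j : ℤ => y ((p : ℤ) * j + (k₀ : ℤ))) ∈
        closure {z : ℤ → Option Bool | ∃ m : ℤ, z = fun j => Psi p q (fun n => x (n + 1)) (j + m)} := by
  classical
  have hp0 : (0:ℤ) < (p:ℤ) := by exact_mod_cast (by omega : 0 < p)
  set T : Set (ℤ → Option Bool) :=
    {z : ℤ → Option Bool | ∃ m : ℤ, z = fun j => Psi p q (fun n => x (n + 1)) (j + m)} with hT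
  set S : ℕ → Set (ℤ → Option Bool) := fun k =>
    {w | ∃ m : ℤ, (p:ℤ) ∣ m + (k:ℤ) ∧ w = fun j => Psi p q x (j + m)} with hS
  have hsub : {y : ℤ → Option Bool | ∃ m : ℤ, y = fun j => Psi p q x (j + m)} ⊆
      ⋃ k ∈ Finset.range p, closure (S k) := by
    rintro w ⟨m, rfl⟩
    have hnn : 0 ≤ (-m) % (p:ℤ) := Int.emod_nonneg _ (by omega)
    have hlt : (-m) % (p:ℤ) < (p:ℤ) := Int.emod_lt_of_pos _ hp0
    refine Set.mem_iUnion₂.mpr ⟨((-m) % (p:ℤ)).toNat, Finset.mem_range.mpr (by omega), ?_⟩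
    · refine subset_closure ⟨m, ?_, rfl⟩
      have hc : ((((-m) % (p:ℤ)).toNat : ℤ)) = (-m) % (p:ℤ) := Int.toNat_of_nonneg hnn
      rw [hc]
      have := Int.emod_add_mul_ediv (-m) (p:ℤ)
      exact ⟨-((-m) / (p:ℤ)), by linarith [this]⟩
  have hclosed : IsClosed (⋃ k ∈ Finset.range p, closure (S k)) :=
    (Finset.range p).finite_toSet.isClosed_biUnion (fun k _ => isClosed_closure)
  have hy2 : y ∈ ⋃ k ∈ Finset.range p, closure (S k) :=
    closure_minimal hsub hclosed hy
  obtain ⟨k, hk, hyk⟩ := Set.mem_iUnion₂.mp hy2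
  rw [Finset.mem_range] at hk
  refine ⟨k, by omega, ?_⟩
  have hF : Continuous (fun (w : ℤ → Option Bool) (j : ℤ) => w ((p:ℤ)*j + (k:ℤ))) :=
    continuous_pi fun j => continuous_apply _
  have hmaps : Set.MapsTo (fun (w : ℤ → Option Bool) (j : ℤ) => w ((p:ℤ)*j + (k:ℤ))) (S k) T := by
    rintro w ⟨m, ⟨m', hm'⟩, rfl⟩
    refine ⟨m', ?_⟩
    funext j
    show Psi p q x ((p:ℤ)*j + (k:ℤ) + m) = Psi p q (fun n => x (n+1)) (j + m')
    rw [← psi_mul hp hq1 hq2]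
    congr 1
    rw [mul_add, ← hm']
    ring
  exact map_mem_closure hF hyk hmaps
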